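/- Let P_X be an m_X × n matrix and P_Z an m_Z × n matrix over 𝔽₂ with P_X · P_Zᵀ = 0, and set H₀ = ker(P_X)/im(P_Zᵀ), H₀* = ker(P_Z)/im(P_Xᵀ), with the induced pairing ([u],[w]) ↦ u·w. Then for every basis ([u₁],…,[u_k]) of H₀ there exists a unique basis ([w₁],…,[w_k]) of H₀* such that [uᵢ]·[wⱼ] = δᵢⱼ for all i, j. In particular dim H₀ = dim H₀*. -/

import Mathlib

/-!
The dot product pairs `ker A / im Bᵀ` with `ker B / im Aᵀ`. It is nondegenerate on both sides
because the annihilator of `ker B` under the dot product is `im Bᵀ` (and symmetrically for `A`),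
so it is a perfect pairing of finite-dimensional spaces. A perfect pairing identifies the second
space with the dual of the first, and the required basis is the image of the dual basis.
-/

abbrev F2 := ZMod 2

open Matrix LinearMap Module

namespace LinearMap.IsPerfPair

variable {K M N ι : Type*} [Field K] [AddCommGroup M] [Module K M] [AddCommGroup N] [Module K N]
  [Finite ι] [DecidableEq ι]

theorem existsUnique_basis_apply_eq_ite (p : M →ₗ[K] N →ₗ[K] K) [p.IsPerfPair]
    (u : Basis ι K M) :
    ∃! w : Basis ι K N, ∀ i j, p (u i) (w j) = if i = j then 1 else 0 := by
  refine ⟨u.dualBasis.map p.flip.toPerfPair.symm, fun i j => ?_, fun w hw => ?_⟩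
  · simp [Finsupp.single_apply]
  · ext j
    refine p.flip.toPerfPair.injective (u.ext fun i => ?_)
    simp [hw, Finsupp.single_apply]

end LinearMap.IsPerfPair

namespace Matrix

variable {K ι m : Type*} [Field K] [Fintype ι] [Fintype m]

theorem mem_range_mulVecLin_transpose_iff (B : Matrix m ι K) (a : ι → K) :
    a ∈ range Bᵀ.mulVecLin ↔ ∀ b ∈ ker B.mulVecLin, a ⬝ᵥ b = 0 := by
  classical
  constructor
  · rintro ⟨v, rfl⟩ b (hb : B *ᵥ b = 0)
    rw [mulVecLin_apply, mulVec_transpose, ← dotProduct_mulVec, hb, dotProduct_zero]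
  · intro h
    -- a functional vanishing on `ker B` factors through `B`
    have ha : dotProductEquiv K ι a ∈ (ker B.mulVecLin).dualAnnihilator :=
      (Submodule.mem_dualAnnihilator _).mpr h
    rw [← range_dualMap_eq_dualAnnihilator_ker] at ha
    obtain ⟨g, hg⟩ := ha
    refine ⟨(dotProductEquiv K m).symm g,
      (dotProductEquiv K ι).injective (LinearMap.ext fun x => ?_)⟩
    rw [← hg]
    simp only [dotProductEquiv_apply_apply, mulVecLin_apply, mulVec_transpose,
      ← dotProduct_mulVec]
    exact LinearMap.congr_fun ((dotProductEquiv K m).apply_symm_apply g) _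

end Matrix

section CSS

variable {K ι m m' : Type*} [Field K] [Fintype ι] [Fintype m] [Fintype m']

-- `cssHomology P_X P_Z` is the paper's `H₀` and `cssHomology P_Z P_X` is `H₀*`.
abbrev cssHomology (A : Matrix m ι K) (B : Matrix m' ι K) : Type _ :=
  ker A.mulVecLin ⧸ (range Bᵀ.mulVecLin).comap (ker A.mulVecLin).subtype

variable (A : Matrix m ι K) (B : Matrix m' ι K)

noncomputable def cssPairing : cssHomology A B →ₗ[K] cssHomology B A →ₗ[K] K :=
  ((dotProductBilin K K).compl₁₂ (ker A.mulVecLin).subtype (ker B.mulVecLin).subtype).liftQ₂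
    _ _ (fun a ha => LinearMap.ext fun b => (mem_range_mulVecLin_transpose_iff B a).mp ha b b.2)
    (fun b hb => LinearMap.ext fun a =>
      (dotProduct_comm _ _).trans ((mem_range_mulVecLin_transpose_iff A b).mp hb a a.2))

theorem cssPairing_mk (a : ker A.mulVecLin) (b : ker B.mulVecLin) :
    cssPairing A B (Submodule.Quotient.mk a) (Submodule.Quotient.mk b) = a.1 ⬝ᵥ b.1 :=
  rfl

theorem cssPairing_flip : (cssPairing A B).flip = cssPairing B A := by
  ext
  exact dotProduct_comm _ _

theorem cssPairing_injective : Function.Injective (cssPairing A B) := by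
  refine (injective_iff_map_eq_zero _).mpr fun x hx => ?_
  induction x using Submodule.Quotient.induction_on with
  | _ a =>
    refine (Submodule.Quotient.mk_eq_zero _).mpr
      ((mem_range_mulVecLin_transpose_iff B a).mpr fun b hb => ?_)
    exact (cssPairing_mk A B a ⟨b, hb⟩).symm.trans (LinearMap.congr_fun hx _)

instance : (cssPairing A B).IsPerfPair :=
  .of_injective (cssPairing_injective A B) (cssPairing_flip A B ▸ cssPairing_injective B A)

theorem cssPairing_eq_iff (x : cssHomology A B) (y : cssHomology B A) (c : K) :
    cssPairing A B x y = c ↔ ∀ (a : ker A.mulVecLin) (b : ker B.mulVecLin),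
      Submodule.Quotient.mk a = x → Submodule.Quotient.mk b = y → a.1 ⬝ᵥ b.1 = c := by
  obtain ⟨a, rfl⟩ := Submodule.Quotient.mk_surjective _ x
  obtain ⟨b, rfl⟩ := Submodule.Quotient.mk_surjective _ y
  refine ⟨fun h a' b' ha hb => ?_, fun h => h a b rfl rfl⟩
  rw [← cssPairing_mk, ha, hb, h]

end CSS

theorem css_dual_basis
    (n mX mZ : ℕ)
    (PX : Matrix (Fin mX) (Fin n) F2) (PZ : Matrix (Fin mZ) (Fin n) F2) :
    (∀ (k : ℕ)
      (u : Module.Basis (Fin k) F2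
        (LinearMap.ker PX.mulVecLin ⧸
          ((LinearMap.range PZ.transpose.mulVecLin).comap
            (LinearMap.ker PX.mulVecLin).subtype :
            Submodule F2 (LinearMap.ker PX.mulVecLin)))),
      ∃! w : Module.Basis (Fin k) F2
        (LinearMap.ker PZ.mulVecLin ⧸
          ((LinearMap.range PX.transpose.mulVecLin).comap
            (LinearMap.ker PZ.mulVecLin).subtype :
            Submodule F2 (LinearMap.ker PZ.mulVecLin))),
        ∀ (i j : Fin k) (a : LinearMap.ker PX.mulVecLin) (b : LinearMap.ker PZ.mulVecLin),
          Submodule.Quotient.mk a = u i → Submodule.Quotient.mk b = w j →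
          ∑ l, (a : Fin n → F2) l * (b : Fin n → F2) l = if i = j then 1 else 0) ∧
    Module.finrank F2
        (LinearMap.ker PX.mulVecLin ⧸
          ((LinearMap.range PZ.transpose.mulVecLin).comap
            (LinearMap.ker PX.mulVecLin).subtype :
            Submodule F2 (LinearMap.ker PX.mulVecLin))) =
      Module.finrank F2
        (LinearMap.ker PZ.mulVecLin ⧸
          ((LinearMap.range PX.transpose.mulVecLin).comap
            (LinearMap.ker PZ.mulVecLin).subtype :
            Submodule F2 (LinearMap.ker PZ.mulVecLin))) := by
  refine ⟨fun k u => ?_, finrank_of_isPerfPair (cssPairing PX PZ)⟩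
  refine (existsUnique_congr fun w => ?_).mp
    (IsPerfPair.existsUnique_basis_apply_eq_ite (cssPairing PX PZ) u)
  exact forall₂_congr fun i j => cssPairing_eq_iff PX PZ (u i) (w j) _
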